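/- arXiv:1707.04769 — 11 statements merged into one kernel-verified Lean document; each statement's English description precedes it below -/
import Mathlib

section
/- For two players with identical valuation v over M = [2k+1], define v'(S) = 2|S| if |S| < k, v'(S) = 2k − 1/(1+e^{f(S)}) if |S| = k, and v'(S) = 2k if |S| > k, for any function f on size-k subsets. Then v' is submodular. -/
/-- The valuation v' built from f on size-k subsets of [2k+1] is submodular. -/
theorem stmt_1 (k : ℕ) (f : Finset (Fin (2 * k + 1)) → ℝ)
    (v' : Finset (Fin (2 * k + 1)) → ℝ)
    (hv' : ∀ S : Finset (Fin (2 * k + 1)),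
      v' S = if S.card < k then 2 * (S.card : ℝ)
        else if S.card = k then 2 * (k : ℝ) - 1 / (1 + Real.exp (f S))
        else 2 * (k : ℝ)) :
    ∀ S T : Finset (Fin (2 * k + 1)), ∀ x : Fin (2 * k + 1),
      S ⊆ T → x ∉ T →
      v' (insert x S) - v' S ≥ v' (insert x T) - v' T := by
  intro S T x hST hxT
  have hxS : x ∉ S := fun h => hxT (hST h)
  have dpos : ∀ A : Finset (Fin (2 * k + 1)), (0:ℝ) < 1 / (1 + Real.exp (f A)) := by
    intro A; positivity
  have dlt1 : ∀ A : Finset (Fin (2 * k + 1)), 1 / (1 + Real.exp (f A)) < 1 := by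
    intro A
    rw [div_lt_one (by positivity)]
    linarith [Real.exp_pos (f A)]
  have m1 : ∀ A : Finset (Fin (2 * k + 1)), ∀ y, y ∉ A → A.card + 1 < k →
      v' (insert y A) - v' A = 2 := by
    intro A y hy h
    rw [hv', hv', Finset.card_insert_of_notMem hy, if_pos h, if_pos (by omega)]
    push_cast; ring
  have m2 : ∀ A : Finset (Fin (2 * k + 1)), ∀ y, y ∉ A → A.card + 1 = k →
      v' (insert y A) - v' A = 2 - 1 / (1 + Real.exp (f (insert y A))) := by
    intro A y hy h
    rw [hv', hv', Finset.card_insert_of_notMem hy, if_neg (by omega), if_pos h,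
      if_pos (by omega)]
    have hc : ((A.card : ℝ)) + 1 = (k : ℝ) := by exact_mod_cast h
    linarith
  have m3 : ∀ A : Finset (Fin (2 * k + 1)), ∀ y, y ∉ A → A.card = k →
      v' (insert y A) - v' A = 1 / (1 + Real.exp (f A)) := by
    intro A y hy h
    rw [hv', hv', Finset.card_insert_of_notMem hy, if_neg (by omega), if_neg (by omega),
      if_neg (by omega), if_pos h]
    ring
  have m4 : ∀ A : Finset (Fin (2 * k + 1)), ∀ y, y ∉ A → k < A.card →
      v' (insert y A) - v' A = 0 := by
    intro A y hy h
    rw [hv', hv', Finset.card_insert_of_notMem hy, if_neg (by omega), if_neg (by omega),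
      if_neg (by omega), if_neg (by omega)]
    ring
  by_cases hE : S = T
  · subst hE; exact le_refl _
  have hlt : S.card < T.card := Finset.card_lt_card (hST.ssubset_of_ne hE)
  rcases lt_trichotomy (T.card + 1) k with hT | hT | hT
  · rw [m1 S x hxS (by omega), m1 T x hxT hT]
  · rw [m1 S x hxS (by omega), m2 T x hxT hT]
    linarith [dpos (insert x T)]
  · rcases eq_or_lt_of_le (Nat.succ_le_of_lt hT) with hTk | hTk
    · -- T.card = k
      have hTk' : T.card = k := by omega
      rw [m3 T x hxT hTk']
      rcases lt_trichotomy (S.card + 1) k with hS | hS | hS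
      · rw [m1 S x hxS hS]; linarith [dlt1 T]
      · rw [m2 S x hxS hS]; linarith [dlt1 T, dlt1 (insert x S)]
      · omega
    · -- k < T.card
      rw [m4 T x hxT (by omega)]
      rcases lt_trichotomy (S.card + 1) k with hS | hS | hS
      · rw [m1 S x hxS hS]; norm_num
      · rw [m2 S x hxS hS]; linarith [dlt1 (insert x S)]
      · rcases eq_or_lt_of_le (Nat.succ_le_of_lt hS) with hSk | hSk
        · rw [m3 S x hxS (by omega)]; linarith [dpos S]
        · rw [m4 S x hxS (by omega)]
end

section
/- With the valuation v defined as v(S) = 2|S| if |S| < k, v(S) = 2k + δ(S) if |S| = k (where −1 < δ(S) < 0), and v(S) = 2k if |S| > k, any EFX allocation of M = [2k+1] between two players with this identical valuation must give one player a bundle of exactly k goods. -/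
lemma stmt_2_aux (k : ℕ) (v : Finset (Fin (2 * k + 1)) → ℝ)
    (δ : Finset (Fin (2 * k + 1)) → ℝ)
    (hv : ∀ S : Finset (Fin (2 * k + 1)),
      v S = if S.card < k then 2 * (S.card : ℝ)
        else if S.card = k then 2 * (k : ℝ) + δ S
        else 2 * (k : ℝ))
    (A B : Finset (Fin (2 * k + 1))) (hA : A.card < k) (hB : k + 2 ≤ B.card)
    (hE : ∀ g ∈ B, v (B.erase g) ≤ v A) : False := by
  obtain ⟨g, hg⟩ : B.Nonempty := Finset.card_pos.mp (by omega)
  have hcard : (B.erase g).card = B.card - 1 := Finset.card_erase_of_mem hg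
  have h1 : v (B.erase g) = 2 * (k : ℝ) := by
    rw [hv, if_neg (by omega), if_neg (by omega)]
  have h2 : v A = 2 * (A.card : ℝ) := by rw [hv, if_pos hA]
  have := hE g hg
  rw [h1, h2] at this
  have : (A.card : ℝ) < k := by exact_mod_cast hA
  linarith [hE g hg, h1 ▸ h2 ▸ hE g hg]

/-- With the valuation v (2|S| for |S|<k, 2k+δ(S) for |S|=k, 2k for |S|>k),
any EFX allocation of [2k+1] between two players with identical valuation v
gives one player exactly k goods. -/
theorem stmt_2 (k : ℕ) (hk : 1 ≤ k)
    (δ : Finset (Fin (2 * k + 1)) → ℝ)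
    (hδ : ∀ S : Finset (Fin (2 * k + 1)), S.card = k → -1 < δ S ∧ δ S < 0)
    (v : Finset (Fin (2 * k + 1)) → ℝ)
    (hv : ∀ S : Finset (Fin (2 * k + 1)),
      v S = if S.card < k then 2 * (S.card : ℝ)
        else if S.card = k then 2 * (k : ℝ) + δ S
        else 2 * (k : ℝ))
    (A₁ A₂ : Finset (Fin (2 * k + 1)))
    (hdisj : Disjoint A₁ A₂) (hcover : A₁ ∪ A₂ = Finset.univ)
    (hEFX : (∀ g ∈ A₂, v (A₂.erase g) ≤ v A₁) ∧
            (∀ g ∈ A₁, v (A₁.erase g) ≤ v A₂)) :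
    A₁.card = k ∨ A₂.card = k := by
  by_contra hn
  push_neg at hn
  obtain ⟨h1, h2⟩ := hn
  have hsum : A₁.card + A₂.card = 2 * k + 1 := by
    rw [← Finset.card_union_of_disjoint hdisj, hcover, Finset.card_univ,
      Fintype.card_fin]
  rcases Nat.lt_or_ge A₁.card k with h | h
  · exact stmt_2_aux k v δ hv A₁ A₂ h (by omega) hEFX.1
  · exact stmt_2_aux k v δ hv A₂ A₁ (by omega) (by omega) hEFX.2
end

section
/- With the valuation v as above (v(S)=2|S| for |S|<k, v(S)=2k+δ(S) for |S|=k with δ strictly increasing in f(S) and −1<δ<0, v(S)=2k for |S|>k), an allocation (A_1, A_2) with |A_1| = k+1 and |A_2| = k is EFX for two players with identical valuation v if and only if f(A_2) ≥ f(S) for every size-k subset S disjoint from A_2. -/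
/-- With the valuation v built from f, an allocation (A₁, A₂) of [2k+1] with
|A₁| = k+1 and |A₂| = k is EFX (for two players with identical valuation v)
iff f(A₂) ≥ f(S) for every size-k subset S disjoint from A₂,
i.e. A₂ is a local maximum of f in the Kneser graph K(2k+1,k). -/
theorem stmt_3 (k : ℕ) (hk : 1 ≤ k) (f : Finset (Fin (2 * k + 1)) → ℝ)
    (v : Finset (Fin (2 * k + 1)) → ℝ)
    (hv : ∀ S : Finset (Fin (2 * k + 1)),
      v S = if S.card < k then 2 * (S.card : ℝ)
        else if S.card = k then 2 * (k : ℝ) - 1 / (1 + Real.exp (f S))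
        else 2 * (k : ℝ))
    (A₁ A₂ : Finset (Fin (2 * k + 1)))
    (hdisj : Disjoint A₁ A₂) (hcover : A₁ ∪ A₂ = Finset.univ)
    (h₁ : A₁.card = k + 1) (h₂ : A₂.card = k) :
    ((∀ g ∈ A₂, v (A₂.erase g) ≤ v A₁) ∧
     (∀ g ∈ A₁, v (A₁.erase g) ≤ v A₂)) ↔
    (∀ S : Finset (Fin (2 * k + 1)), S.card = k → Disjoint S A₂ → f S ≤ f A₂) := by
  have hA1 : v A₁ = 2 * (k : ℝ) := by
    rw [hv, if_neg (by omega), if_neg (by omega)]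
  have hA2 : v A₂ = 2 * (k : ℝ) - 1 / (1 + Real.exp (f A₂)) := by
    rw [hv, if_neg (by omega), if_pos h₂]
  have key : ∀ a b : ℝ,
      2 * (k : ℝ) - 1 / (1 + Real.exp a) ≤ 2 * (k : ℝ) - 1 / (1 + Real.exp b) ↔ a ≤ b := by
    intro a b
    rw [sub_le_sub_iff_left, div_le_div_iff₀ (by positivity) (by positivity),
      one_mul, one_mul, add_le_add_iff_left, Real.exp_le_exp]
  have hcomp : ∀ x, x ∈ A₁ ↔ x ∉ A₂ := by
    intro x
    constructor
    · intro hx hx2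
      exact (Finset.disjoint_left.mp hdisj hx) hx2
    · intro hx
      have : x ∈ A₁ ∪ A₂ := by rw [hcover]; exact Finset.mem_univ x
      rcases Finset.mem_union.mp this with h | h
      · exact h
      · exact absurd h hx
  constructor
  · rintro ⟨-, h⟩ S hS hSd
    have hSsub : S ⊆ A₁ := fun x hx => (hcomp x).mpr (Finset.disjoint_left.mp hSd hx)
    obtain ⟨g, hg, hgS⟩ : ∃ g ∈ A₁, g ∉ S := by
      by_contra hc
      push_neg at hc
      have := Finset.card_le_card (fun x hx => hc x hx)
      omega
    have hSeq : S = A₁.erase g := by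
      apply Finset.eq_of_subset_of_card_le
      · intro x hx
        exact Finset.mem_erase.mpr ⟨fun he => hgS (he ▸ hx), hSsub hx⟩
      · rw [Finset.card_erase_of_mem hg]; omega
    have hle := h g hg
    rw [← hSeq] at hle
    rwa [hv, if_neg (by omega), if_pos hS, hA2, key] at hle
  · intro h
    constructor
    · intro g hg
      have hc : (A₂.erase g).card = k - 1 := by
        rw [Finset.card_erase_of_mem hg, h₂]
      rw [hv, if_pos (by omega), hA1, hc]
      have : ((k : ℝ) - 1 : ℝ) ≤ k := by linarith
      push_cast [Nat.cast_sub hk]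
      linarith
    · intro g hg
      have hc : (A₁.erase g).card = k := by
        rw [Finset.card_erase_of_mem hg, h₁]
        omega
      have hd : Disjoint (A₁.erase g) A₂ :=
        Finset.disjoint_of_subset_left (Finset.erase_subset _ _) hdisj
      rw [hv, if_neg (by omega), if_pos hc, hA2, key]
      exact h _ hc hd
end

section
/- For any number n of players with identical monotone valuation v over a finite set of goods M, the leximin++ solution (a maximal allocation under the total order ≺_++) is EFX. In particular, an EFX allocation always exists for identical general valuations. -/
open scoped Classical

private theorem lex_mid {α : Type*} (r : α → α → Prop) (s : List α) {x y : α} (u w : List α)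
    (h : r x y) : List.Lex r (s ++ x :: u) (s ++ y :: w) :=
  List.Lex.append_left r (List.Lex.rel h) s

private theorem lex_map {α β : Type*} (f : α → β) {r : α → α → Prop} {s : β → β → Prop}
    (h : ∀ a b, r a b → s (f a) (f b)) :
    ∀ {l₁ l₂ : List α}, List.Lex r l₁ l₂ → List.Lex s (l₁.map f) (l₂.map f)
  | _, _, List.Lex.nil => List.Lex.nil
  | _, _, List.Lex.cons h' => List.Lex.cons (lex_map f h h')
  | _, _, List.Lex.rel h' => List.Lex.rel (h _ _ h')

private theorem dropWhile_not {α : Type*} {r : α → α → Prop} {p : α → Bool}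
    (hdc : ∀ x y, r x y → p y = true → p x = true) :
    ∀ {l : List α}, l.Pairwise r → ∀ x ∈ l.dropWhile p, ¬ p x = true := by
  intro l
  induction l with
  | nil => intro _; simp
  | cons a t ih =>
    intro hp
    rcases List.pairwise_cons.mp hp with ⟨hra, hpt⟩
    rw [List.dropWhile_cons]
    by_cases ha : p a = true
    · rw [if_pos ha]; exact ih hpt
    · rw [if_neg ha]
      intro x hx hpx
      rcases List.mem_cons.mp hx with rfl | hx
      · exact ha hpx
      · exact ha (hdc _ _ (hra x hx) hpx)

private theorem takeWhile_sort {G : Type*} [DecidableEq G] {n : ℕ}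
    (v : Finset G → ℝ) (X : Fin n → Finset G) (le : Fin n → Fin n → Bool)
    (hle : ∀ x y, le x y = true ↔ (v (X x) < v (X y) ∨ (v (X x) = v (X y) ∧ x ≤ y)))
    (m : ℝ) (hmin : ∀ k, m ≤ v (X k)) :
    ((List.finRange n).mergeSort le).takeWhile (fun k => decide (v (X k) = m))
      = (Finset.univ.filter (fun k => v (X k) = m)).sort (· ≤ ·) := by
  set p : Fin n → Bool := fun k => decide (v (X k) = m) with hp
  set L := (List.finRange n).mergeSort le with hL
  have hperm : L.Perm (List.finRange n) := List.mergeSort_perm _ _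
  have hnd : L.Nodup := hperm.nodup_iff.mpr (List.nodup_finRange n)
  have htrans : ∀ a b c : Fin n, le a b = true → le b c = true → le a c = true := by
    intro a b c hab hbc
    simp only [hle] at hab hbc ⊢
    rcases hab with h1 | ⟨h1, h1'⟩ <;> rcases hbc with h2 | ⟨h2, h2'⟩
    · exact Or.inl (h1.trans h2)
    · exact Or.inl (by rw [← h2]; exact h1)
    · exact Or.inl (by rw [h1]; exact h2)
    · exact Or.inr ⟨h1.trans h2, h1'.trans h2'⟩
  have htot : ∀ a b : Fin n, (le a b || le b a) = true := by
    intro a b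
    simp only [Bool.or_eq_true, hle]
    rcases lt_trichotomy (v (X a)) (v (X b)) with h | h | h
    · exact Or.inl (Or.inl h)
    · rcases le_total a b with h' | h'
      · exact Or.inl (Or.inr ⟨h, h'⟩)
      · exact Or.inr (Or.inr ⟨h.symm, h'⟩)
    · exact Or.inr (Or.inl h)
  have hsorted : L.Pairwise (fun x y => v (X x) < v (X y) ∨ (v (X x) = v (X y) ∧ x ≤ y)) := by
    rw [hL]
    exact (List.pairwise_mergeSort htrans htot (List.finRange n)).imp (fun h => (hle _ _).mp h)
  have hdc : ∀ x y : Fin n,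
      (v (X x) < v (X y) ∨ (v (X x) = v (X y) ∧ x ≤ y)) → p y = true → p x = true := by
    intro x y hxy hy
    simp only [hp, decide_eq_true_eq] at hy ⊢
    rcases hxy with h | ⟨h, _⟩
    · rw [hy] at h; exact absurd h (not_lt.mpr (hmin x))
    · exact h.trans hy
  have hdrop := dropWhile_not hdc hsorted
  refine (fun hp h1 h2 => List.Perm.eq_of_pairwise' (r := ((· ≤ ·) : Fin n → Fin n → Prop)) h1 h2 hp) ?_ ?_ ?_
  · apply List.perm_of_nodup_nodup_toFinset_eq
    · exact List.Sublist.nodup (List.takeWhile_sublist _) hnd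
    · exact Finset.sort_nodup _ _
    · ext x
      simp only [List.mem_toFinset, Finset.mem_sort, Finset.mem_filter, Finset.mem_univ, true_and]
      constructor
      · intro hx
        have := List.mem_takeWhile_imp hx
        simpa [hp] using this
      · intro hx
        have hxL : x ∈ L := hperm.mem_iff.mpr (List.mem_finRange x)
        rw [← List.takeWhile_append_dropWhile (p := p) (l := L)] at hxL
        rcases List.mem_append.mp hxL with h | h
        · exact h
        · exact absurd (by simp [hp, hx]) (hdrop x h)
  · have h1 : (L.takeWhile p).Pairwise
        (fun x y => v (X x) < v (X y) ∨ (v (X x) = v (X y) ∧ x ≤ y)) :=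
      List.Pairwise.sublist (List.takeWhile_sublist _) hsorted
    refine List.Pairwise.imp_of_mem ?_ h1
    intro a b ha hb hab
    have hpa : v (X a) = m := by simpa [hp] using List.mem_takeWhile_imp ha
    have hpb : v (X b) = m := by simpa [hp] using List.mem_takeWhile_imp hb
    rcases hab with h | ⟨_, h⟩
    · rw [hpa, hpb] at h; exact absurd h (lt_irrefl m)
    · exact h
  · exact Finset.pairwise_sort _ _

private theorem key_lex_aux {G : Type*} [DecidableEq G] {n : ℕ}
    (v : Finset G → ℝ) (A B : Fin n → Finset G)
    (leA leB : Fin n → Fin n → Bool)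
    (hleA : ∀ x y, leA x y = true ↔ (v (A x) < v (A y) ∨ (v (A x) = v (A y) ∧ x ≤ y)))
    (hleB : ∀ x y, leB x y = true ↔ (v (B x) < v (B y) ∨ (v (B x) = v (B y) ∧ x ≤ y)))
    (m : ℝ) (i : Fin n)
    (him : v (A i) = m)
    (hminA : ∀ k, m ≤ v (A k))
    (hminB : ∀ k, m ≤ v (B k))
    (himax : ∀ k, v (A k) = m → k ≤ i)
    (hoff : ∀ k, k ≠ i → v (A k) = m → B k = A k)
    (hoff2 : ∀ k, k ≠ i → v (B k) = m → v (A k) = m)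
    (hci : v (B i) = m → (A i).card < (B i).card) :
    List.Lex (fun p q : ℝ × ℕ => p.1 < q.1 ∨ (p.1 = q.1 ∧ p.2 < q.2))
      (((List.finRange n).mergeSort leA).map (fun k => (v (A k), (A k).card)))
      (((List.finRange n).mergeSort leB).map (fun k => (v (B k), (B k).card))) := by
  classical
  set T : Finset (Fin n) := Finset.univ.filter (fun k => v (A k) = m) with hT
  have hiT : i ∈ T := Finset.mem_filter.mpr ⟨Finset.mem_univ i, him⟩
  set s : List (Fin n) := (T.erase i).sort (· ≤ ·) with hs
  have hmem_s : ∀ x : Fin n, x ∈ s ↔ (x ≠ i ∧ v (A x) = m) := by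
    intro x
    rw [hs, Finset.mem_sort, Finset.mem_erase, hT, Finset.mem_filter]
    simp
  have hins : i ∉ s := fun h => ((hmem_s i).mp h).1 rfl
  have hsplit : T.sort (· ≤ ·) = s ++ [i] := by
    refine (fun hp h1 h2 => List.Perm.eq_of_pairwise' (r := ((· ≤ ·) : Fin n → Fin n → Prop)) h1 h2 hp) ?_ ?_ ?_
    · apply List.perm_of_nodup_nodup_toFinset_eq
      · exact Finset.sort_nodup _ _
      · exact List.Nodup.append (by rw [hs]; exact Finset.sort_nodup _ _)
          (List.nodup_singleton i)
          (fun a ha hai => hins ((List.mem_singleton.mp hai) ▸ ha))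
      · ext x
        simp only [List.mem_toFinset, List.mem_append, List.mem_singleton, Finset.mem_sort,
          hmem_s x, hT, Finset.mem_filter, Finset.mem_univ, true_and]
        constructor
        · intro hx
          by_cases hxi : x = i
          · exact Or.inr hxi
          · exact Or.inl ⟨hxi, hx⟩
        · rintro (⟨_, hx⟩ | rfl)
          · exact hx
          · exact him
    · exact Finset.pairwise_sort _ _
    · refine List.pairwise_append.mpr ⟨?_, List.pairwise_singleton _ _, ?_⟩
      · rw [hs]; exact Finset.pairwise_sort _ _
      · intro a ha b hb
        rw [List.mem_singleton.mp hb]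
        exact himax a ((hmem_s a).mp ha).2
  set pA : Fin n → Bool := fun k => decide (v (A k) = m) with hpA
  set pB : Fin n → Bool := fun k => decide (v (B k) = m) with hpB
  set LA := (List.finRange n).mergeSort leA with hLA
  set LB := (List.finRange n).mergeSort leB with hLB
  have hpermB : LB.Perm (List.finRange n) := by rw [hLB]; exact List.mergeSort_perm _ _
  have htwA : LA.takeWhile pA = s ++ [i] := by
    rw [hLA, hpA, takeWhile_sort v A leA hleA m hminA, ← hT, hsplit]
  have hdecA : LA = s ++ i :: LA.dropWhile pA := by
    conv_lhs => rw [← List.takeWhile_append_dropWhile (p := pA) (l := LA)]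
    rw [htwA, List.append_assoc, List.singleton_append]
  have hmapA : LA.map (fun k => (v (A k), (A k).card))
      = s.map (fun k => (v (A k), (A k).card)) ++
        (v (A i), (A i).card) :: (LA.dropWhile pA).map (fun k => (v (A k), (A k).card)) := by
    conv_lhs => rw [hdecA]
    rw [List.map_append, List.map_cons]
  have hmapcong : s.map (fun k => (v (B k), (B k).card))
      = s.map (fun k => (v (A k), (A k).card)) := by
    apply List.map_congr_left
    intro k hk
    have hk' := (hmem_s k).mp hk
    rw [hoff k hk'.1 hk'.2]
  by_cases hBi : v (B i) = m
  · -- the moved-to bundle still has minimum value; its size strictly increased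
    have hTB : (Finset.univ.filter (fun k => v (B k) = m)) = T := by
      ext k
      simp only [Finset.mem_filter, Finset.mem_univ, true_and, hT]
      constructor
      · intro hk
        by_cases hki : k = i
        · rw [hki]; exact him
        · exact hoff2 k hki hk
      · intro hk
        by_cases hki : k = i
        · rw [hki]; exact hBi
        · rw [hoff k hki hk]; exact hk
    have htwB : LB.takeWhile pB = s ++ [i] := by
      rw [hLB, hpB, takeWhile_sort v B leB hleB m hminB, hTB, hsplit]
    have hdecB : LB = s ++ i :: LB.dropWhile pB := by
      conv_lhs => rw [← List.takeWhile_append_dropWhile (p := pB) (l := LB)]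
      rw [htwB, List.append_assoc, List.singleton_append]
    rw [hmapA]
    conv_rhs => rw [hdecB]
    rw [List.map_append, List.map_cons, hmapcong]
    apply lex_mid
    exact Or.inr ⟨him.trans hBi.symm, hci hBi⟩
  · -- the moved-to bundle now has value strictly above the old minimum
    have hTB : (Finset.univ.filter (fun k => v (B k) = m)) = T.erase i := by
      ext k
      simp only [Finset.mem_filter, Finset.mem_univ, true_and, Finset.mem_erase, hT]
      constructor
      · intro hk
        have hki : k ≠ i := fun h => hBi (h ▸ hk)
        exact ⟨hki, hoff2 k hki hk⟩
      · rintro ⟨hki, hk⟩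
        rw [hoff k hki hk]; exact hk
    have htwB : LB.takeWhile pB = s := by
      rw [hLB, hpB, takeWhile_sort v B leB hleB m hminB, hTB, ← hs]
    have hdecB : LB = s ++ LB.dropWhile pB := by
      conv_lhs => rw [← List.takeWhile_append_dropWhile (p := pB) (l := LB)]
      rw [htwB]
    have hlenLB : LB.length = n := by
      rw [hpermB.length_eq, List.length_finRange]
    have hlens : s.length = (T.erase i).card := by rw [hs, Finset.length_sort]
    have hTcard : T.card ≤ n := le_trans (Finset.card_le_univ T) (by simp)
    have hT1 : 1 ≤ T.card := Finset.card_pos.mpr ⟨i, hiT⟩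
    have hdne : LB.dropWhile pB ≠ [] := by
      intro h
      have hlen2 : LB.length = s.length := by
        conv_lhs => rw [hdecB, h]
        rw [List.append_nil]
      rw [hlenLB, hlens, Finset.card_erase_of_mem hiT] at hlen2
      omega
    obtain ⟨k, dt, hkdt⟩ := List.exists_cons_of_ne_nil hdne
    have hkmem : k ∈ LB.dropWhile pB := by rw [hkdt]; exact List.mem_cons_self
    have htransB : ∀ a b c : Fin n, leB a b = true → leB b c = true → leB a c = true := by
      intro a b c hab hbc
      simp only [hleB] at hab hbc ⊢
      rcases hab with h1 | ⟨h1, h1'⟩ <;> rcases hbc with h2 | ⟨h2, h2'⟩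
      · exact Or.inl (h1.trans h2)
      · exact Or.inl (by rw [← h2]; exact h1)
      · exact Or.inl (by rw [h1]; exact h2)
      · exact Or.inr ⟨h1.trans h2, h1'.trans h2'⟩
    have htotB : ∀ a b : Fin n, (leB a b || leB b a) = true := by
      intro a b
      simp only [Bool.or_eq_true, hleB]
      rcases lt_trichotomy (v (B a)) (v (B b)) with h | h | h
      · exact Or.inl (Or.inl h)
      · rcases le_total a b with h' | h'
        · exact Or.inl (Or.inr ⟨h, h'⟩)
        · exact Or.inr (Or.inr ⟨h.symm, h'⟩)
      · exact Or.inr (Or.inl h)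
    have hsortedB : LB.Pairwise (fun x y => v (B x) < v (B y) ∨ (v (B x) = v (B y) ∧ x ≤ y)) := by
      rw [hLB]
      exact (List.pairwise_mergeSort htransB htotB (List.finRange n)).imp
        (fun h => (hleB _ _).mp h)
    have hdcB : ∀ x y : Fin n,
        (v (B x) < v (B y) ∨ (v (B x) = v (B y) ∧ x ≤ y)) → pB y = true → pB x = true := by
      intro x y hxy hy
      simp only [hpB, decide_eq_true_eq] at hy ⊢
      rcases hxy with h | ⟨h, _⟩
      · rw [hy] at h; exact absurd h (not_lt.mpr (hminB x))
      · exact h.trans hy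
    have hknot : ¬ pB k = true := dropWhile_not hdcB hsortedB k hkmem
    have hkne : v (B k) ≠ m := by
      intro h
      exact hknot (by simp [hpB, h])
    have hkm : m < v (B k) := lt_of_le_of_ne (hminB k) (Ne.symm hkne)
    rw [hmapA]
    conv_rhs => rw [hdecB, hkdt]
    rw [List.map_append, List.map_cons, hmapcong]
    apply lex_mid
    exact Or.inl (by rw [him]; exact hkm)

/-- For n players with an identical general (normalized, monotone) valuation v,
any allocation maximal under the leximin++ order is EFX; in particular an EFX
allocation always exists. -/
theorem stmt_10 {G : Type*} [DecidableEq G] (n : ℕ) (hn : 0 < n) (M : Finset G)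
    (v : Finset G → ℝ)
    (hnorm : v ∅ = 0)
    (hmono : ∀ S T : Finset G, S ⊆ T → v S ≤ v T) :
    let isAlloc : (Fin n → Finset G) → Prop := fun A =>
      (∀ i j, i ≠ j → Disjoint (A i) (A j)) ∧ Finset.univ.biUnion A = M
    let key : (Fin n → Finset G) → List (ℝ × ℕ) := fun X =>
      ((List.finRange n).mergeSort (fun i j =>
          decide (v (X i) < v (X j) ∨ (v (X i) = v (X j) ∧ i ≤ j)))).map
        (fun i => (v (X i), (X i).card))
    let prec : (Fin n → Finset G) → (Fin n → Finset G) → Prop := fun X Y =>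
      List.Lex (fun p q : ℝ × ℕ => p.1 < q.1 ∨ (p.1 = q.1 ∧ p.2 < q.2)) (key X) (key Y)
    let EFX : (Fin n → Finset G) → Prop := fun A =>
      ∀ i j : Fin n, ∀ g ∈ A j, v ((A j).erase g) ≤ v (A i)
    (∀ A, isAlloc A → (∀ B, isAlloc B → ¬ prec A B) → EFX A) ∧
    (∃ A, isAlloc A ∧ EFX A) := by
  intro isAlloc key prec EFX
  haveI hne : Nonempty (Fin n) := ⟨⟨0, hn⟩⟩
  have main : ∀ A, isAlloc A → (∀ B, isAlloc B → ¬ prec A B) → EFX A := by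
    intro A hA hmaxA
    show ∀ i j : Fin n, ∀ g ∈ A j, v ((A j).erase g) ≤ v (A i)
    intro i0 j g hg
    by_contra hlt
    push_neg at hlt
    obtain ⟨hdisj, hun⟩ :
        (∀ a b : Fin n, a ≠ b → Disjoint (A a) (A b)) ∧ Finset.univ.biUnion A = M := hA
    set m : ℝ := Finset.univ.inf' Finset.univ_nonempty (fun k => v (A k)) with hm
    have hminA : ∀ k, m ≤ v (A k) := fun k => Finset.inf'_le _ (Finset.mem_univ k)
    obtain ⟨iw, -, hiw⟩ := Finset.exists_mem_eq_inf' Finset.univ_nonempty (fun k => v (A k))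
    set T : Finset (Fin n) := Finset.univ.filter (fun k => v (A k) = m) with hT
    have hTne : T.Nonempty := ⟨iw, Finset.mem_filter.mpr ⟨Finset.mem_univ _, hiw.symm⟩⟩
    set i : Fin n := T.max' hTne with hi
    have hiT : i ∈ T := T.max'_mem hTne
    have him : v (A i) = m := (Finset.mem_filter.mp hiT).2
    have himax : ∀ k, v (A k) = m → k ≤ i := fun k hk =>
      Finset.le_max' T k (Finset.mem_filter.mpr ⟨Finset.mem_univ _, hk⟩)
    have hjm : m < v ((A j).erase g) := lt_of_le_of_lt (hminA i0) hlt
    have hjm' : m < v (A j) := lt_of_lt_of_le hjm (hmono _ _ (Finset.erase_subset _ _))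
    have hij : i ≠ j := by
      intro h
      rw [← h, him] at hjm'
      exact lt_irrefl _ hjm'
    have hgAi : g ∉ A i := fun h => (Finset.disjoint_left.mp (hdisj i j hij) h) hg
    set B : Fin n → Finset G :=
      fun k => if k = i then insert g (A i) else if k = j then (A j).erase g else A k with hB
    have hBi : B i = insert g (A i) := by simp [hB]
    have hBj : B j = (A j).erase g := by simp [hB, Ne.symm hij]
    have hBo : ∀ k, k ≠ i → k ≠ j → B k = A k := by
      intro k h1 h2; simp [hB, h1, h2]
    have hclaim : ∀ k, k ≠ i → B k ⊆ A k ∧ g ∉ B k := by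
      intro k hk
      by_cases hkj : k = j
      · subst hkj
        rw [hBj]
        exact ⟨Finset.erase_subset _ _, Finset.notMem_erase _ _⟩
      · rw [hBo k hk hkj]
        exact ⟨Finset.Subset.refl _, fun h => (Finset.disjoint_left.mp (hdisj k j hkj) h) hg⟩
    have hBdisj : ∀ a b : Fin n, a ≠ b → Disjoint (B a) (B b) := by
      intro a b hab
      by_cases ha : a = i
      · have hab' : i ≠ b := ha ▸ hab
        rw [ha, hBi, Finset.disjoint_left]
        intro x hx hxb
        rcases Finset.mem_insert.mp hx with rfl | hx
        · exact (hclaim b (Ne.symm hab')).2 hxb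
        · exact Finset.disjoint_left.mp (hdisj i b hab') hx ((hclaim b (Ne.symm hab')).1 hxb)
      · by_cases hb : b = i
        · have hab' : a ≠ i := hb ▸ hab
          rw [hb, hBi, Finset.disjoint_right]
          intro x hx hxa
          rcases Finset.mem_insert.mp hx with rfl | hx
          · exact (hclaim a ha).2 hxa
          · exact Finset.disjoint_left.mp (hdisj i a (Ne.symm hab')) hx ((hclaim a ha).1 hxa)
        · exact Finset.disjoint_of_subset_left (hclaim a ha).1
            (Finset.disjoint_of_subset_right (hclaim b hb).1 (hdisj a b hab))
    have hBun : Finset.univ.biUnion B = M := by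
      rw [← hun]
      ext x
      simp only [Finset.mem_biUnion, Finset.mem_univ, true_and]
      constructor
      · rintro ⟨k, hk⟩
        by_cases hki : k = i
        · subst hki
          rw [hBi] at hk
          rcases Finset.mem_insert.mp hk with rfl | hk
          · exact ⟨j, hg⟩
          · exact ⟨i, hk⟩
        · by_cases hkj : k = j
          · rw [hkj, hBj] at hk
            exact ⟨j, Finset.erase_subset _ _ hk⟩
          · rw [hBo k hki hkj] at hk
            exact ⟨k, hk⟩
      · rintro ⟨k, hk⟩
        by_cases hki : k = i
        · subst hki
          exact ⟨i, by rw [hBi]; exact Finset.mem_insert_of_mem hk⟩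
        · by_cases hkj : k = j
          · rw [hkj] at hk
            by_cases hxg : x = g
            · exact ⟨i, by rw [hBi, hxg]; exact Finset.mem_insert_self _ _⟩
            · exact ⟨j, by rw [hBj]; exact Finset.mem_erase.mpr ⟨hxg, hk⟩⟩
          · exact ⟨k, by rw [hBo k hki hkj]; exact hk⟩
    have hminB : ∀ k, m ≤ v (B k) := by
      intro k
      by_cases hki : k = i
      · subst hki
        rw [hBi, ← him]
        exact hmono _ _ (Finset.subset_insert _ _)
      · by_cases hkj : k = j
        · subst hkj
          rw [hBj]
          exact le_of_lt hjm
        · rw [hBo k hki hkj]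
          exact hminA k
    have hoff : ∀ k, k ≠ i → v (A k) = m → B k = A k := by
      intro k hki hk
      have hkj : k ≠ j := by
        intro h
        rw [← h] at hjm'
        rw [hk] at hjm'
        exact lt_irrefl _ hjm'
      exact hBo k hki hkj
    have hoff2 : ∀ k, k ≠ i → v (B k) = m → v (A k) = m := by
      intro k hki hk
      by_cases hkj : k = j
      · subst hkj
        rw [hBj] at hk
        rw [hk] at hjm
        exact absurd hjm (lt_irrefl _)
      · rw [hBo k hki hkj] at hk
        exact hk
    have hci : v (B i) = m → (A i).card < (B i).card := by
      intro _
      rw [hBi, Finset.card_insert_of_notMem hgAi]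
      exact Nat.lt_succ_self _
    refine hmaxA B ⟨hBdisj, hBun⟩ ?_
    show List.Lex (fun p q : ℝ × ℕ => p.1 < q.1 ∨ (p.1 = q.1 ∧ p.2 < q.2))
      (((List.finRange n).mergeSort (fun a b =>
          decide (v (A a) < v (A b) ∨ (v (A a) = v (A b) ∧ a ≤ b)))).map
        (fun k => (v (A k), (A k).card)))
      (((List.finRange n).mergeSort (fun a b =>
          decide (v (B a) < v (B b) ∨ (v (B a) = v (B b) ∧ a ≤ b)))).map
        (fun k => (v (B k), (B k).card)))
    exact key_lex_aux v A B _ _ (fun x y => by simp) (fun x y => by simp)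
      m i him hminA hminB himax hoff hoff2 hci
  refine ⟨main, ?_⟩
  set i0 : Fin n := ⟨0, hn⟩ with hi0
  set A0 : Fin n → Finset G := fun k => if k = i0 then M else ∅ with hA0
  have h1 : ∀ a b : Fin n, a ≠ b → Disjoint (A0 a) (A0 b) := by
    intro a b hab
    simp only [hA0]
    by_cases ha : a = i0 <;> by_cases hb : b = i0
    · exact absurd (ha.trans hb.symm) hab
    · simp [ha, hb]
    · simp [ha, hb]
    · simp [ha, hb]
  have h2 : Finset.univ.biUnion A0 = M := by
    ext x
    simp only [Finset.mem_biUnion, Finset.mem_univ, true_and, hA0]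
    constructor
    · rintro ⟨k, hk⟩
      by_cases hki : k = i0
      · rw [if_pos hki] at hk; exact hk
      · rw [if_neg hki] at hk; exact absurd hk (Finset.notMem_empty x)
    · intro hx
      exact ⟨i0, by rw [if_pos rfl]; exact hx⟩
  have hA0alloc : isAlloc A0 := ⟨h1, h2⟩
  set S : Finset (Fin n → Finset G) :=
    (Fintype.piFinset (fun _ : Fin n => M.powerset)).filter (fun A => isAlloc A) with hS
  have hmemS : ∀ A, isAlloc A → A ∈ S := by
    intro A hA
    have hAcopy := hA
    obtain ⟨-, hA2⟩ :
        (∀ a b : Fin n, a ≠ b → Disjoint (A a) (A b)) ∧ Finset.univ.biUnion A = M := hAcopy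
    rw [hS, Finset.mem_filter]
    refine ⟨?_, hA⟩
    rw [Fintype.mem_piFinset]
    intro k
    rw [Finset.mem_powerset]
    have hsub : A k ⊆ Finset.univ.biUnion A :=
      Finset.subset_biUnion_of_mem A (Finset.mem_univ k)
    rw [hA2] at hsub
    exact hsub
  have hSne : S.Nonempty := ⟨A0, hmemS A0 hA0alloc⟩
  obtain ⟨Am, hAmS, hmax⟩ :=
    Finset.exists_max_image S (fun X => (key X).map (fun p : ℝ × ℕ => toLex p)) hSne
  have hAmalloc : isAlloc Am := by
    rw [hS, Finset.mem_filter] at hAmS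
    exact hAmS.2
  refine ⟨Am, hAmalloc, main Am hAmalloc ?_⟩
  intro Bx hBx hprec
  have hprec' : List.Lex (fun p q : ℝ × ℕ => p.1 < q.1 ∨ (p.1 = q.1 ∧ p.2 < q.2))
      (key Am) (key Bx) := hprec
  have hlt : List.Lex (· < ·) ((key Am).map (fun p : ℝ × ℕ => toLex p))
      ((key Bx).map (fun p : ℝ × ℕ => toLex p)) :=
    lex_map (fun p : ℝ × ℕ => toLex p)
      (fun a b hab => Prod.Lex.lt_iff.mpr hab) hprec'
  have hle := hmax Bx (hmemS Bx hBx)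
  have hlt' : (key Am).map (fun p : ℝ × ℕ => toLex p)
      < (key Bx).map (fun p : ℝ × ℕ => toLex p) := hlt
  exact absurd hle (not_le.mpr hlt')
end

section
/- There exist additive valuations for two players over three goods such that no allocation is both EFX and Pareto optimal. Concretely: goods a,b,c with v_1(a)=2, v_1(b)=1, v_1(c)=0 and v_2(a)=2, v_2(b)=0, v_2(c)=1. -/
/-- For the additive valuations v₁ = (2,1,0), v₂ = (2,0,1) over goods
(a,b,c) = (0,1,2), no allocation is both EFX and Pareto optimal. -/
theorem stmt_12 :
    let w₁ : Fin 3 → ℝ := ![2, 1, 0]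
    let w₂ : Fin 3 → ℝ := ![2, 0, 1]
    let val : (Fin 3 → ℝ) → Finset (Fin 3) → ℝ := fun w S => ∑ g ∈ S, w g
    ¬ ∃ A₁ A₂ : Finset (Fin 3), Disjoint A₁ A₂ ∧ A₁ ∪ A₂ = Finset.univ ∧
      -- EFX
      ((∀ g ∈ A₂, val w₁ (A₂.erase g) ≤ val w₁ A₁) ∧
       (∀ g ∈ A₁, val w₂ (A₁.erase g) ≤ val w₂ A₂)) ∧
      -- Pareto optimal
      (¬ ∃ B₁ B₂ : Finset (Fin 3), Disjoint B₁ B₂ ∧ B₁ ∪ B₂ = Finset.univ ∧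
        val w₁ A₁ ≤ val w₁ B₁ ∧ val w₂ A₂ ≤ val w₂ B₂ ∧
        (val w₁ A₁ < val w₁ B₁ ∨ val w₂ A₂ < val w₂ B₂)) := by
  intro w₁ w₂ val
  have key : ∀ (w : Fin 3 → ℝ) (S : Finset (Fin 3)),
      val w S = ∑ g : Fin 3, if g ∈ S then w g else 0 := by
    intro w S
    show (∑ g ∈ S, w g) = _
    rw [Finset.sum_ite_mem, Finset.univ_inter]
  rintro ⟨A₁, A₂, hdisj, hunion, ⟨hE1, hE2⟩, hPO⟩
  have hA₂ : A₂ = (A₁ ∪ A₂) \ A₁ := (Finset.union_sdiff_cancel_left hdisj).symm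
  rw [hunion] at hA₂
  subst hA₂
  have hmem : A₁ ∈ (Finset.univ : Finset (Finset (Fin 3))) := Finset.mem_univ _
  fin_cases hmem
  -- A₁ = ∅
  · have := hE1 1 (by decide)
    simp (config := { decide := true }) only [key, Fin.sum_univ_three] at this
    norm_num [w₁, Matrix.cons_val_two, Matrix.tail_cons, Matrix.head_cons] at this
  -- A₁ = {0}
  · apply hPO
    refine ⟨{0, 1}, {2}, by decide, by decide, ?_, ?_, ?_⟩
    · simp (config := { decide := true }) only [key, Fin.sum_univ_three]
      norm_num [w₁]
    · simp (config := { decide := true }) only [key, Fin.sum_univ_three]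
      norm_num [w₂]
    · left
      simp (config := { decide := true }) only [key, Fin.sum_univ_three]
      norm_num [w₁]
  -- A₁ = {1}
  · have := hE1 2 (by decide)
    simp (config := { decide := true }) only [key, Fin.sum_univ_three] at this
    norm_num [w₁] at this
  -- A₁ = {0,1}
  · have := hE2 1 (by decide)
    simp (config := { decide := true }) only [key, Fin.sum_univ_three] at this
    norm_num [w₂, Matrix.cons_val_two, Matrix.tail_cons, Matrix.head_cons] at this
  -- A₁ = {2}
  · have := hE1 0 (by decide)
    simp (config := { decide := true }) only [key, Fin.sum_univ_three] at this
    norm_num [w₁, Matrix.cons_val_two, Matrix.tail_cons, Matrix.head_cons] at this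
  -- A₁ = {0,2}
  · have := hE2 2 (by decide)
    simp (config := { decide := true }) only [key, Fin.sum_univ_three] at this
    norm_num [w₂] at this
  -- A₁ = {1,2}
  · apply hPO
    refine ⟨{1}, {0, 2}, by decide, by decide, ?_, ?_, ?_⟩
    · simp (config := { decide := true }) only [key, Fin.sum_univ_three]
      norm_num [w₁, Matrix.cons_val_two, Matrix.tail_cons, Matrix.head_cons]
    · simp (config := { decide := true }) only [key, Fin.sum_univ_three]
      norm_num [w₂, Matrix.cons_val_two, Matrix.tail_cons, Matrix.head_cons]
    · right
      simp (config := { decide := true }) only [key, Fin.sum_univ_three]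
      norm_num [w₂, Matrix.cons_val_two, Matrix.tail_cons, Matrix.head_cons]
  -- A₁ = univ
  · have := hE2 1 (by decide)
    simp (config := { decide := true }) only [key, Fin.sum_univ_three] at this
    norm_num [w₂, Matrix.cons_val_two, Matrix.tail_cons, Matrix.head_cons] at this
end

section
/- There exist identical general (monotone) valuations for two players over two goods such that no allocation is both EFX and Pareto optimal. Concretely: goods a,b with v({a})=0, v({b})=1, v({a,b})=2 for both players. -/
lemma fin2_finset_cases (s : Finset (Fin 2)) :
    s = ∅ ∨ s = {0} ∨ s = {1} ∨ s = {0,1} := by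
  revert s; decide

/-- For two players with the identical monotone valuation v over goods {a,b} =
{0,1} given by v(∅)=0, v({a})=0, v({b})=1, v({a,b})=2, no allocation is both
EFX and Pareto optimal. -/
theorem stmt_13 (v : Finset (Fin 2) → ℝ)
    (h0 : v ∅ = 0) (ha : v {0} = 0) (hb : v {1} = 1) (hab : v {0, 1} = 2) :
    ¬ ∃ A₁ A₂ : Finset (Fin 2), Disjoint A₁ A₂ ∧ A₁ ∪ A₂ = Finset.univ ∧
      -- EFX
      ((∀ g ∈ A₂, v (A₂.erase g) ≤ v A₁) ∧
       (∀ g ∈ A₁, v (A₁.erase g) ≤ v A₂)) ∧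
      -- Pareto optimal
      (¬ ∃ B₁ B₂ : Finset (Fin 2), Disjoint B₁ B₂ ∧ B₁ ∪ B₂ = Finset.univ ∧
        v A₁ ≤ v B₁ ∧ v A₂ ≤ v B₂ ∧ (v A₁ < v B₁ ∨ v A₂ < v B₂)) := by
  have he : ({0,1} : Finset (Fin 2)).erase 0 = {1} := by decide
  rintro ⟨A₁, A₂, hd, hu, ⟨e1, e2⟩, hp⟩
  rcases fin2_finset_cases A₁ with h1 | h1 | h1 | h1 <;>
    rcases fin2_finset_cases A₂ with h2 | h2 | h2 | h2 <;>
    subst h1 <;> subst h2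
  any_goals (exfalso; revert hu hd; decide)
  any_goals (have := e1 0 (by decide); rw [he, hb, h0] at this; linarith)
  any_goals (have := e2 0 (by decide); rw [he, hb, h0] at this; linarith)
  · exact hp ⟨∅, {0,1}, by decide, by decide, by rw [ha, h0], by rw [hb, hab]; norm_num,
      Or.inr (by rw [hb, hab]; norm_num)⟩
  · exact hp ⟨{0,1}, ∅, by decide, by decide, by rw [hb, hab]; norm_num, by rw [ha, h0],
      Or.inl (by rw [hb, hab]; norm_num)⟩
end

section
/- For n players with identical monotone valuation v having nonzero marginal utility (v(S∪{g}) > v(S) for all S and g ∉ S), any leximin-maximal allocation is both EFX and Pareto optimal. -/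
open List

private lemma sortedSortR (l : List ℝ) :
    (l.mergeSort (fun x y => decide (x ≤ y))).Pairwise (· ≤ ·) := by
  have := List.pairwise_mergeSort (le := fun x y : ℝ => decide (x ≤ y))
    (fun a b c hab hbc => by simp_all; linarith)
    (fun a b => by simpa using le_total a b) l
  exact this.imp (fun h => by simpa using h)

private lemma countP_le_split (l : List ℝ) (r : ℝ) :
    l.countP (fun x => decide (x ≤ r)) = l.countP (fun x => decide (x < r)) + l.count r := by
  induction l with
  | nil => simp
  | cons a t ih =>
    simp only [List.countP_cons, List.count_cons, ih]
    rcases lt_trichotomy a r with h | h | h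
    · simp only [if_pos (decide_eq_true h.le), if_pos (decide_eq_true h),
        beq_iff_eq, if_neg h.ne]
      omega
    · subst h
      simp
      omega
    · simp [not_le.mpr h, not_lt.mpr h.le, beq_iff_eq, h.ne']

private lemma keyLex : ∀ (l1 l2 : List ℝ), l1.Pairwise (· ≤ ·) → l2.Pairwise (· ≤ ·) →
    l1.length = l2.length → ∀ r : ℝ, (∀ x : ℝ, x < r → l1.count x = l2.count x) →
    l2.count r < l1.count r → List.Lex (· < ·) l1 l2 := by
  intro l1
  induction l1 with
  | nil => intro l2 _ _ _ r _ hr; simp at hr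
  | cons a t1 ih =>
    intro l2 h1 h2 hlen r hlt hr
    cases l2 with
    | nil => simp at hlen
    | cons b t2 =>
      rw [List.pairwise_cons] at h1 h2
      rcases eq_or_ne a b with hab | hab
      · subst hab
        apply List.Lex.cons
        apply ih t2 h1.2 h2.2 (by simpa using hlen) r
        · intro x hx
          have := hlt x hx
          simp only [List.count_cons] at this
          omega
        · simp only [List.count_cons] at hr
          omega
      · have har : a ≤ r := by
          have hrmem : r ∈ a :: t1 := by
            apply List.count_pos_iff.mp; omega
          rcases List.mem_cons.mp hrmem with h | h
          · exact h ▸ le_refl _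
          · exact h1.1 r h
        have hrb : r ≤ b := by
          by_contra hbr
          push_neg at hbr
          have hb1 : b ∈ a :: t1 := by
            apply List.count_pos_iff.mp
            rw [hlt b hbr]
            simp [List.count_cons]
          have hab2 : a ≤ b := by
            rcases List.mem_cons.mp hb1 with h | h
            · exact h ▸ le_refl _
            · exact h1.1 b h
          rcases eq_or_lt_of_le har with he | hl
          · exact absurd hab2 (not_le.mpr (he ▸ hbr))
          · have hcnt : (a :: t1).count a = (b :: t2).count a := hlt a hl
            have ha2 : a ∈ b :: t2 := by
              apply List.count_pos_iff.mp
              rw [← hcnt]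
              simp [List.count_cons]
            have hba : b ≤ a := by
              rcases List.mem_cons.mp ha2 with h | h
              · exact h ▸ le_refl _
              · exact h2.1 a h
            exact hab (le_antisymm hab2 hba)
        exact List.Lex.rel (lt_of_le_of_ne (har.trans hrb) hab)

private lemma count_map_finRange (n : ℕ) (f : Fin n → ℝ) (x : ℝ) :
    (((List.finRange n).map f).count x) = (List.finRange n).countP (fun i => f i == x) := by
  rw [List.count, List.countP_map]
  rfl

private lemma lex_of_counts (n : ℕ) (f g : Fin n → ℝ) (r : ℝ)
    (hlt : ∀ x : ℝ, x < r →
      ((List.finRange n).map f).count x = ((List.finRange n).map g).count x)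
    (hr : ((List.finRange n).map g).count r < ((List.finRange n).map f).count r) :
    List.Lex (· < ·)
      (((List.finRange n).map f).mergeSort (fun x y => decide (x ≤ y)))
      (((List.finRange n).map g).mergeSort (fun x y => decide (x ≤ y))) := by
  have p1 := List.mergeSort_perm ((List.finRange n).map f) (fun x y => decide (x ≤ y))
  have p2 := List.mergeSort_perm ((List.finRange n).map g) (fun x y => decide (x ≤ y))
  apply keyLex _ _ (sortedSortR _) (sortedSortR _)
    (by simp [List.length_mergeSort]) r
  · intro x hx
    rw [p1.count_eq, p2.count_eq]
    exact hlt x hx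
  · rw [p1.count_eq, p2.count_eq]
    exact hr

/-- For n players sharing an identical monotone valuation v with nonzero
marginal utility, any leximin-maximal allocation (maximal w.r.t. the
lexicographic order on nondecreasingly sorted utility vectors) is both EFX and
Pareto optimal. -/
theorem stmt_15 {G : Type*} [DecidableEq G] (n : ℕ) (M : Finset G)
    (v : Finset G → ℝ)
    (hnorm : v ∅ = 0)
    (hmono : ∀ S T : Finset G, S ⊆ T → v S ≤ v T)
    (hmarg : ∀ S : Finset G, ∀ g ∈ M, g ∉ S → v S < v (insert g S)) :
    let isAlloc : (Fin n → Finset G) → Prop := fun A =>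
      (∀ i j, i ≠ j → Disjoint (A i) (A j)) ∧ Finset.univ.biUnion A = M
    let sortedUtil : (Fin n → Finset G) → List ℝ := fun A =>
      (((List.finRange n).map (fun i => v (A i))).mergeSort
        (fun x y => decide (x ≤ y)))
    ∀ A : Fin n → Finset G, isAlloc A →
      (∀ B : Fin n → Finset G, isAlloc B →
        ¬ List.Lex (· < ·) (sortedUtil A) (sortedUtil B)) →
      -- EFX
      ((∀ i j : Fin n, ∀ g ∈ A j, v ((A j).erase g) ≤ v (A i)) ∧
      -- Pareto optimal
       (¬ ∃ B : Fin n → Finset G, isAlloc B ∧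
          (∀ i, v (A i) ≤ v (B i)) ∧ (∃ i, v (A i) < v (B i)))) := by
  intro isAlloc sortedUtil A hA hmax
  constructor
  · -- EFX
    intro i j g hg
    by_cases hij : i = j
    · subst hij
      exact hmono _ _ (Finset.erase_subset _ _)
    · by_contra hcon
      push_neg at hcon
      -- hcon : v (A i) < v ((A j).erase g)
      have hgM : g ∈ M := by
        rw [← hA.2]
        exact Finset.mem_biUnion.mpr ⟨j, Finset.mem_univ _, hg⟩
      have hgAi : g ∉ A i := fun h => Finset.disjoint_left.mp (hA.1 i j hij) h hg
      set B : Fin n → Finset G := fun k =>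
        if k = i then insert g (A i) else if k = j then (A j).erase g else A k with hBdef
      have hBA : ∀ k x, x ∈ B k ↔ ((x ∈ A k ∧ ¬(x = g ∧ k = j)) ∨ (x = g ∧ k = i)) := by
        intro k x
        simp only [hBdef]
        split_ifs with h1 h2
        · subst h1
          simp only [Finset.mem_insert]
          constructor
          · rintro (h | h)
            · exact Or.inr ⟨h, by trivial⟩
            · exact Or.inl ⟨h, fun hh => hij hh.2⟩
          · rintro (⟨h, _⟩ | ⟨h, _⟩)
            · exact Or.inr h
            · exact Or.inl h
        · subst h2
          simp only [Finset.mem_erase]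
          constructor
          · rintro ⟨h1', h2'⟩
            exact Or.inl ⟨h2', fun hh => h1' hh.1⟩
          · rintro (⟨h1', h2'⟩ | ⟨h1', h2'⟩)
            · exact ⟨fun hh => h2' ⟨hh, by trivial⟩, h1'⟩
            · exact absurd h2' h1
        · constructor
          · intro h
            exact Or.inl ⟨h, fun hh => h2 hh.2⟩
          · rintro (⟨h, _⟩ | ⟨_, h⟩)
            · exact h
            · exact absurd h h1
      have hBalloc : isAlloc B := by
        constructor
        · intro k l hkl
          rw [Finset.disjoint_left]
          intro x hxk hxl
          rw [hBA] at hxk hxl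
          rcases hxk with ⟨hk1, hk2⟩ | ⟨hk1, hk2⟩ <;>
            rcases hxl with ⟨hl1, hl2⟩ | ⟨hl1, hl2⟩
          · exact Finset.disjoint_left.mp (hA.1 k l hkl) hk1 hl1
          · subst hl1; subst hl2
            -- x = g ∈ A k, g ∈ A j, k ≠ j from hk2
            have hkj : k ≠ j := fun h => hk2 ⟨rfl, h⟩
            exact Finset.disjoint_left.mp (hA.1 k j hkj) hk1 hg
          · subst hk1; subst hk2
            have hlj : l ≠ j := fun h => hl2 ⟨rfl, h⟩
            exact Finset.disjoint_left.mp (hA.1 l j hlj) hl1 hg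
          · exact hkl (hk2.trans hl2.symm)
        · ext x
          rw [Finset.mem_biUnion, ← hA.2, Finset.mem_biUnion]
          constructor
          · rintro ⟨k, _, hk⟩
            rw [hBA] at hk
            rcases hk with ⟨h, _⟩ | ⟨h, _⟩
            · exact ⟨k, Finset.mem_univ _, h⟩
            · exact ⟨j, Finset.mem_univ _, h ▸ hg⟩
          · rintro ⟨k, _, hk⟩
            by_cases hxg : x = g
            · exact ⟨i, Finset.mem_univ _, (hBA i x).mpr (Or.inr ⟨hxg, rfl⟩)⟩
            · exact ⟨k, Finset.mem_univ _, (hBA k x).mpr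
                (Or.inl ⟨hk, fun hh => hxg hh.1⟩)⟩
      -- utility facts
      have hBi : B i = insert g (A i) := by simp [hBdef]
      have hBj : B j = (A j).erase g := by
        simp only [hBdef]
        rw [if_neg (fun h => hij h.symm)]; simp
      have hBk : ∀ k, k ≠ i → k ≠ j → B k = A k := by
        intro k h1 h2; simp [hBdef, h1, h2]
      have ha' : v (A i) < v (B i) := hBi ▸ hmarg (A i) g hgM hgAi
      have hb' : v (A i) < v (B j) := hBj ▸ hcon
      have hbj : v (A i) < v (A j) :=
        lt_of_lt_of_le hb' (hBj ▸ hmono _ _ (Finset.erase_subset _ _))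
      -- count argument with r = v (A i)
      set f : Fin n → ℝ := fun k => v (A k) with hf
      set gg : Fin n → ℝ := fun k => v (B k) with hgdef
      have hLex : List.Lex (· < ·) (sortedUtil A) (sortedUtil B) := by
        apply lex_of_counts n f gg (v (A i))
        · intro x hx
          rw [count_map_finRange, count_map_finRange]
          apply List.countP_congr
          intro k _
          simp only [beq_iff_eq]
          have hfk : f k = x ↔ gg k = x := by
            by_cases h1 : k = i
            · subst h1
              constructor <;> intro h <;> exfalso
              · exact absurd h (by simp only [hf]; linarith)
              · exact absurd h (by simp only [hgdef]; intro hh; linarith)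
            · by_cases h2 : k = j
              · subst h2
                constructor <;> intro h <;> exfalso
                · exact absurd h (by simp only [hf]; intro hh; linarith)
                · exact absurd h (by simp only [hgdef]; intro hh; linarith)
              · simp only [hf, hgdef, hBk k h1 h2]
          exact hfk
        · rw [count_map_finRange, count_map_finRange]
          have hperm := List.perm_cons_erase (List.mem_finRange i)
          rw [hperm.countP_eq (fun k => f k == v (A i)),
            hperm.countP_eq (fun k => gg k == v (A i))]
          simp only [List.countP_cons]
          have hfi : (f i == v (A i)) = true := by simp [hf]
          have hgi : (gg i == v (A i)) = true ↔ False := by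
            simp only [beq_iff_eq, iff_false, hgdef]
            intro hh; linarith
          have hrest : ((List.finRange n).erase i).countP (fun k => f k == v (A i)) =
              ((List.finRange n).erase i).countP (fun k => gg k == v (A i)) := by
            apply List.countP_congr
            intro k hk
            have hki : k ≠ i :=
              (((List.nodup_finRange n).mem_erase_iff).mp hk).1
            simp only [beq_iff_eq]
            by_cases h2 : k = j
            · subst h2
              constructor <;> intro h <;> exfalso
              · exact absurd h (by simp only [hf]; intro hh; linarith)
              · exact absurd h (by simp only [hgdef]; intro hh; linarith)
            · simp only [hf, hgdef, hBk k hki h2]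
          rw [hfi, hrest]
          simp only [hgi]
          simp
      exact hmax B hBalloc hLex
  · -- Pareto optimality
    rintro ⟨B, hB, hle, i0, hi0⟩
    set f : Fin n → ℝ := fun k => v (A k) with hf
    set gg : Fin n → ℝ := fun k => v (B k) with hgdef
    set l1 : List ℝ := (List.finRange n).map f with hl1
    set l2 : List ℝ := (List.finRange n).map gg with hl2
    have hsum : l1.sum < l2.sum := by
      rw [hl1, hl2, ← Fin.sum_univ_def, ← Fin.sum_univ_def]
      exact Finset.sum_lt_sum (fun i _ => hle i) ⟨i0, Finset.mem_univ _, hi0⟩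
    set D : Finset ℝ := (l1 ++ l2).toFinset.filter (fun x => l1.count x ≠ l2.count x)
      with hD
    have hne : D.Nonempty := by
      by_contra hemp
      rw [Finset.not_nonempty_iff_eq_empty] at hemp
      have hcnt : ∀ x : ℝ, l1.count x = l2.count x := by
        intro x
        by_contra hx
        have hmem : x ∈ l1 ++ l2 := by
          by_contra hm
          rw [List.mem_append, not_or] at hm
          rw [List.count_eq_zero.mpr hm.1, List.count_eq_zero.mpr hm.2] at hx
          exact hx rfl
        have : x ∈ D := by
          rw [hD, Finset.mem_filter]
          exact ⟨List.mem_toFinset.mpr hmem, by simpa using hx⟩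
        rw [hemp] at this
        exact absurd this (Finset.notMem_empty x)
      have hperm : l1 ~ l2 := List.perm_iff_count.mpr hcnt
      exact absurd (hperm.sum_eq) (ne_of_lt hsum)
    set r : ℝ := D.min' hne with hr
    have hrD : l1.count r ≠ l2.count r := by
      have := Finset.mem_filter.mp (D.min'_mem hne)
      simpa using this.2
    have hlt : ∀ x : ℝ, x < r → l1.count x = l2.count x := by
      intro x hx
      by_contra hxc
      have hmem : x ∈ l1 ++ l2 := by
        by_contra hm
        rw [List.mem_append, not_or] at hm
        rw [List.count_eq_zero.mpr hm.1, List.count_eq_zero.mpr hm.2] at hxc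
        exact hxc rfl
      have hxD : x ∈ D := by
        rw [hD, Finset.mem_filter]
        exact ⟨List.mem_toFinset.mpr hmem, by simpa using hxc⟩
      exact absurd hx (not_lt.mpr (D.min'_le x hxD))
    have hcount : l2.count r < l1.count r := by
      have h1 : l2.countP (fun x => decide (x ≤ r)) ≤ l1.countP (fun x => decide (x ≤ r)) := by
        rw [hl1, hl2, List.countP_map, List.countP_map]
        apply List.countP_mono_left
        intro k _ hk
        simp only [Function.comp, decide_eq_true_eq] at hk ⊢
        exact le_trans (hle k) hk
      have h2 : l1.countP (fun x => decide (x < r)) = l2.countP (fun x => decide (x < r)) := by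
        have hfilt : l1.filter (fun x => decide (x < r)) ~ l2.filter (fun x => decide (x < r)) := by
          rw [List.perm_iff_count]
          intro x
          by_cases hx : x < r
          · rw [List.count_filter (by simpa using hx), List.count_filter (by simpa using hx)]
            exact hlt x hx
          · rw [List.count_eq_zero.mpr, List.count_eq_zero.mpr]
            · intro hm
              exact hx (by simpa using (List.mem_filter.mp hm).2)
            · intro hm
              exact hx (by simpa using (List.mem_filter.mp hm).2)
        rw [List.countP_eq_length_filter, List.countP_eq_length_filter]
        exact hfilt.length_eq
      have h3 := countP_le_split l1 r
      have h4 := countP_le_split l2 r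
      omega
    exact hmax B hB (lex_of_counts n f gg r hlt hcount)
end

section
/- For two players with additive valuations v_1, v_2 satisfying v_1(M) = v_2(M) and nonzero marginal utility (every good has strictly positive value to each player), any leximin-maximal allocation is both EFX and Pareto optimal. -/
/-- Key auxiliary lemma: under a leximin-maximal allocation (only the
"min strictly increases" part is needed), player 1 does not envy player 2
in violation of EFX. -/
lemma efx_aux {G : Type*} [DecidableEq G] (M : Finset G)
    (w₁ w₂ : G → ℝ)
    (hpos : ∀ g ∈ M, 0 < w₁ g ∧ 0 < w₂ g)
    (heq : ∑ g ∈ M, w₁ g = ∑ g ∈ M, w₂ g)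
    (A₁ A₂ : Finset G) (hdisj : Disjoint A₁ A₂) (hunion : A₁ ∪ A₂ = M)
    (hlex : ∀ B₁ B₂ : Finset G, Disjoint B₁ B₂ → B₁ ∪ B₂ = M →
      ¬ (min (∑ x ∈ A₁, w₁ x) (∑ x ∈ A₂, w₂ x) <
          min (∑ x ∈ B₁, w₁ x) (∑ x ∈ B₂, w₂ x))) :
    ∀ g ∈ A₂, ∑ x ∈ A₂.erase g, w₁ x ≤ ∑ x ∈ A₁, w₁ x := by
  intro g hg
  by_contra hgt
  push_neg at hgt
  set T := ∑ x ∈ M, w₁ x with hT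
  have hgM : g ∈ M := hunion ▸ Finset.mem_union_right _ hg
  have hw1 : 0 < w₁ g := (hpos g hgM).1
  have hgA1 : g ∉ A₁ := Finset.disjoint_right.mp hdisj hg
  have hsum1 : ∑ x ∈ A₁, w₁ x + ∑ x ∈ A₂, w₁ x = T := by
    rw [← Finset.sum_union hdisj, hunion]
  have hsum2 : ∑ x ∈ A₁, w₂ x + ∑ x ∈ A₂, w₂ x = T := by
    rw [← Finset.sum_union hdisj, hunion, heq]
  have he1 : ∑ x ∈ A₂.erase g, w₁ x = ∑ x ∈ A₂, w₁ x - w₁ g :=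
    Finset.sum_erase_eq_sub hg
  have hA1lt : ∑ x ∈ A₁, w₁ x < T / 2 := by linarith
  have hm := min_le_left (∑ x ∈ A₁, w₁ x) (∑ x ∈ A₂, w₂ x)
  rcases lt_or_ge (∑ x ∈ A₂, w₂ x) (T / 2) with hc | hc
  · -- swap the two bundles: both players then get more than T/2
    exact hlex A₂ A₁ hdisj.symm (by rw [Finset.union_comm]; exact hunion)
      (lt_min (by linarith) (by linarith))
  · -- move g to player 1, let player 2 pick her preferred bundle
    have hdC : Disjoint (insert g A₁) (A₂.erase g) :=
      Finset.disjoint_insert_left.mpr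
        ⟨Finset.notMem_erase g A₂, hdisj.mono_right (Finset.erase_subset _ _)⟩
    have huC : insert g A₁ ∪ A₂.erase g = M := by
      rw [Finset.insert_union, ← Finset.union_insert, Finset.insert_erase hg, hunion]
    have hsumC : ∑ x ∈ insert g A₁, w₂ x + ∑ x ∈ A₂.erase g, w₂ x = T := by
      rw [← Finset.sum_union hdC, huC, heq]
    have hi1 : ∑ x ∈ insert g A₁, w₁ x = w₁ g + ∑ x ∈ A₁, w₁ x :=
      Finset.sum_insert hgA1
    rcases le_or_gt (T / 2) (∑ x ∈ A₂.erase g, w₂ x) with hc2 | hc2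
    · exact hlex _ _ hdC huC (lt_min (by linarith) (by linarith))
    · exact hlex _ _ hdC.symm (by rw [Finset.union_comm]; exact huC)
        (lt_min (by linarith) (by linarith))

/-- For two players with additive valuations of equal total value and nonzero
marginal utility (every good strictly valued by each player), any
leximin-maximal allocation is both EFX and Pareto optimal. -/
theorem stmt_16 {G : Type*} [DecidableEq G] (M : Finset G)
    (w₁ w₂ : G → ℝ)
    (hpos : ∀ g ∈ M, 0 < w₁ g ∧ 0 < w₂ g)
    (heq : ∑ g ∈ M, w₁ g = ∑ g ∈ M, w₂ g) :
    let val₁ : Finset G → ℝ := fun S => ∑ g ∈ S, w₁ g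
    let val₂ : Finset G → ℝ := fun S => ∑ g ∈ S, w₂ g
    ∀ A₁ A₂ : Finset G, Disjoint A₁ A₂ → A₁ ∪ A₂ = M →
      -- leximin-maximal: no allocation beats A in the leximin order
      (∀ B₁ B₂ : Finset G, Disjoint B₁ B₂ → B₁ ∪ B₂ = M →
        ¬ (min (val₁ A₁) (val₂ A₂) < min (val₁ B₁) (val₂ B₂) ∨
           (min (val₁ A₁) (val₂ A₂) = min (val₁ B₁) (val₂ B₂) ∧
            max (val₁ A₁) (val₂ A₂) < max (val₁ B₁) (val₂ B₂)))) →
      -- EFX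
      ((∀ g ∈ A₂, val₁ (A₂.erase g) ≤ val₁ A₁) ∧
       (∀ g ∈ A₁, val₂ (A₁.erase g) ≤ val₂ A₂)) ∧
      -- Pareto optimal
      (¬ ∃ B₁ B₂ : Finset G, Disjoint B₁ B₂ ∧ B₁ ∪ B₂ = M ∧
        val₁ A₁ ≤ val₁ B₁ ∧ val₂ A₂ ≤ val₂ B₂ ∧
        (val₁ A₁ < val₁ B₁ ∨ val₂ A₂ < val₂ B₂)) := by
  intro val₁ val₂ A₁ A₂ hdisj hunion hlex
  refine ⟨⟨?_, ?_⟩, ?_⟩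
  · exact efx_aux M w₁ w₂ hpos heq A₁ A₂ hdisj hunion
      (fun B₁ B₂ hd hu h => hlex B₁ B₂ hd hu (Or.inl h))
  · refine efx_aux M w₂ w₁ (fun g hg => ⟨(hpos g hg).2, (hpos g hg).1⟩) heq.symm
      A₂ A₁ hdisj.symm (by rw [Finset.union_comm]; exact hunion) ?_
    intro B₁ B₂ hd hu h
    refine hlex B₂ B₁ hd.symm (by rw [Finset.union_comm]; exact hu) (Or.inl ?_)
    rw [min_comm (val₁ A₁), min_comm (val₁ B₂)]
    exact h
  · rintro ⟨B₁, B₂, hd, hu, h1, h2, h3⟩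
    have hmin : min (val₁ A₁) (val₂ A₂) ≤ min (val₁ B₁) (val₂ B₂) :=
      min_le_min h1 h2
    rcases lt_or_eq_of_le hmin with hlt | heq'
    · exact hlex B₁ B₂ hd hu (Or.inl hlt)
    · refine hlex B₁ B₂ hd hu (Or.inr ⟨heq', ?_⟩)
      have hsA : min (val₁ A₁) (val₂ A₂) + max (val₁ A₁) (val₂ A₂) =
          val₁ A₁ + val₂ A₂ := min_add_max _ _
      have hsB : min (val₁ B₁) (val₂ B₂) + max (val₁ B₁) (val₂ B₂) =
          val₁ B₁ + val₂ B₂ := min_add_max _ _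
      rcases h3 with h | h <;> linarith
end

section
/- If an allocation A with envy graph G (a directed edge from i to j iff v_i(A_i) < v_i(A_j)) contains an envy cycle, then permuting bundles along the cycle yields an allocation A' that is a permutation of A, is still c-EFX whenever A is c-EFX, and whose envy graph has strictly fewer edges than G. -/
open scoped Classical

/-- Envy-cycle elimination: if the envy graph of an allocation A contains an
envy cycle (here: a nontrivial permutation σ along which every moved player
envies the owner of the bundle it receives), then permuting bundles along the
cycle yields an allocation A' that is a permutation of A, is c-EFX whenever A
is c-EFX, and whose envy graph has strictly fewer edges. -/
theorem stmt_17 {G : Type*} [DecidableEq G] (n : ℕ)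
    (v : Fin n → Finset G → ℝ)
    (hmono : ∀ i, ∀ S T : Finset G, S ⊆ T → v i S ≤ v i T)
    (A : Fin n → Finset G)
    (c : ℝ) (hc0 : 0 < c) (hc1 : c ≤ 1)
    (σ : Equiv.Perm (Fin n)) (hnt : ∃ i, σ i ≠ i)
    (hcycle : ∀ i, σ i ≠ i → v i (A i) < v i (A (σ i))) :
    let A' : Fin n → Finset G := fun i => A (σ i)
    let edges : (Fin n → Finset G) → Finset (Fin n × Fin n) := fun X =>
      Finset.univ.filter (fun p => v p.1 (X p.1) < v p.1 (X p.2))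
    (∃ π : Equiv.Perm (Fin n), ∀ i, A' i = A (π i)) ∧
    ((∀ i j : Fin n, ∀ g ∈ A j, c * v i ((A j).erase g) ≤ v i (A i)) →
     (∀ i j : Fin n, ∀ g ∈ A' j, c * v i ((A' j).erase g) ≤ v i (A' i))) ∧
    (edges A').card < (edges A).card := by
  intro A' edges
  obtain ⟨i0, hi0⟩ := hnt
  have hAle : ∀ i, v i (A i) ≤ v i (A (σ i)) := by
    intro i
    by_cases h : σ i = i
    · rw [h]
    · exact (hcycle i h).le
  refine ⟨⟨σ, fun i => rfl⟩, ?_, ?_⟩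
  · intro hEFX i j g hg
    exact le_trans (hEFX i (σ j) g hg) (hAle i)
  · set f : Fin n × Fin n → Fin n × Fin n := fun p => (p.1, σ p.2) with hf
    have hinj : Function.Injective f := by
      intro p q h
      simp only [hf, Prod.mk.injEq] at h
      exact Prod.ext h.1 (σ.injective h.2)
    have hsub : (edges A').image f ⊆ edges A := by
      intro q hq
      obtain ⟨p, hp, rfl⟩ := Finset.mem_image.mp hq
      simp only [edges, A', Finset.mem_filter, Finset.mem_univ, true_and] at hp ⊢
      exact lt_of_le_of_lt (hAle p.1) hp
    have hmem : (i0, σ i0) ∈ edges A := by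
      simp only [edges, Finset.mem_filter, Finset.mem_univ, true_and]
      exact hcycle i0 hi0
    have hnmem : (i0, σ i0) ∉ (edges A').image f := by
      intro h
      obtain ⟨p, hp, hfp⟩ := Finset.mem_image.mp h
      simp only [hf, Prod.mk.injEq] at hfp
      have h1 : p.1 = i0 := hfp.1
      have h2 : p.2 = i0 := σ.injective hfp.2
      simp only [edges, A', Finset.mem_filter, Finset.mem_univ, true_and, h1, h2] at hp
      exact lt_irrefl _ hp
    calc (edges A').card = ((edges A').image f).card :=
          (Finset.card_image_of_injective _ hinj).symm
      _ < (edges A).card :=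
          Finset.card_lt_card ⟨hsub, fun hall => hnmem (hall hmem)⟩
end

section
/- Suppose player i's valuation v_i is subadditive, v_i(A_i) ≥ v_i(A_j) (i does not envy j), and after adding good g* to A_j there exists g ∈ A_j ∪ {g*} with v_i(A_i) < (1/2)·v_i((A_j ∪ {g*}) \ {g}). Then v_i({g*}) > v_i(A_i). -/
/-- Key step for Algorithm 3: if v_i is subadditive and monotone, player i does
not envy j (v_i(A_i) ≥ v_i(A_j)), and after adding g* to A_j some good g of
A_j ∪ {g*} witnesses a violation of 1/2-EFX
(v_i(A_i) < (1/2)·v_i((A_j ∪ {g*}) \ {g})), then v_i({g*}) > v_i(A_i). -/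
theorem stmt_18 {G : Type*} [DecidableEq G]
    (v : Finset G → ℝ)
    (hmono : ∀ S T : Finset G, S ⊆ T → v S ≤ v T)
    (hsub : ∀ S T : Finset G, v (S ∪ T) ≤ v S + v T)
    (Ai Aj : Finset G) (gstar : G)
    (hdisj : Disjoint Ai Aj) (hg : gstar ∉ Ai ∪ Aj)
    (hnoenvy : v Aj ≤ v Ai)
    (hviol : ∃ g ∈ insert gstar Aj,
      v Ai < (1 / 2) * v ((insert gstar Aj).erase g)) :
    v Ai < v {gstar} := by
  obtain ⟨g, hgmem, hlt⟩ := hviol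
  have h1 : v ((insert gstar Aj).erase g) ≤ v (insert gstar Aj) :=
    hmono _ _ (Finset.erase_subset _ _)
  have h2 : v (insert gstar Aj) ≤ v {gstar} + v Aj := by
    have := hsub {gstar} Aj
    rw [Finset.insert_eq]; exact this
  linarith
end

section
/- The fairness properties 1/2-EFX and EF1 are incomparable: (a) with additive valuations v_1 = (3,1,0), v_2 = (3,0,1) over goods (a,b,c), the allocation ({a,b},{c}) is EF1 but not 1/2-EFX; (b) with v_1 = v_2 = (1,1,1,1) over goods (a,b,c,d), the allocation ({a,b,c},{d}) is 1/2-EFX but not EF1. -/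
/-- 1/2-EFX and EF1 are incomparable:
(a) for additive valuations v₁ = (3,1,0), v₂ = (3,0,1) over goods (a,b,c),
the allocation ({a,b},{c}) is EF1 but not 1/2-EFX;
(b) for v₁ = v₂ = (1,1,1,1) over goods (a,b,c,d), the allocation
({a,b,c},{d}) is 1/2-EFX but not EF1. -/
theorem stmt_19 :
    let w₁ : Fin 3 → ℝ := ![3, 1, 0]
    let w₂ : Fin 3 → ℝ := ![3, 0, 1]
    let val3 : (Fin 3 → ℝ) → Finset (Fin 3) → ℝ := fun w S => ∑ g ∈ S, w g
    let A₁ : Finset (Fin 3) := {0, 1}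
    let A₂ : Finset (Fin 3) := {2}
    let w : Fin 4 → ℝ := ![1, 1, 1, 1]
    let val4 : Finset (Fin 4) → ℝ := fun S => ∑ g ∈ S, w g
    let B₁ : Finset (Fin 4) := {0, 1, 2}
    let B₂ : Finset (Fin 4) := {3}
    -- (a) EF1 holds
    (((val3 w₁ A₁ < val3 w₁ A₂ → ∃ g ∈ A₂, val3 w₁ (A₂.erase g) ≤ val3 w₁ A₁) ∧
      (val3 w₂ A₂ < val3 w₂ A₁ → ∃ g ∈ A₁, val3 w₂ (A₁.erase g) ≤ val3 w₂ A₂)) ∧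
    -- (a) but 1/2-EFX fails
     ¬ ((∀ g ∈ A₂, (1 / 2) * val3 w₁ (A₂.erase g) ≤ val3 w₁ A₁) ∧
        (∀ g ∈ A₁, (1 / 2) * val3 w₂ (A₁.erase g) ≤ val3 w₂ A₂))) ∧
    -- (b) 1/2-EFX holds
    (((∀ g ∈ B₂, (1 / 2) * val4 (B₂.erase g) ≤ val4 B₁) ∧
      (∀ g ∈ B₁, (1 / 2) * val4 (B₁.erase g) ≤ val4 B₂)) ∧
    -- (b) but EF1 fails
     ¬ ((val4 B₁ < val4 B₂ → ∃ g ∈ B₂, val4 (B₂.erase g) ≤ val4 B₁) ∧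
        (val4 B₂ < val4 B₁ → ∃ g ∈ B₁, val4 (B₁.erase g) ≤ val4 B₂))) := by
  refine ⟨⟨⟨fun h => ?_, fun h => ?_⟩, fun ⟨h1, h2⟩ => ?_⟩,
    ⟨fun g hg => ?_, fun g hg => ?_⟩, fun ⟨h1, h2⟩ => ?_⟩
  · norm_num [Finset.sum_insert, Finset.sum_singleton, Finset.mem_insert, Finset.mem_singleton, Fin.ext_iff, Matrix.cons_val_two, Matrix.cons_val_three] at h
  · exact ⟨0, by decide, by rw [show ({0,1} : Finset (Fin 3)).erase 0 = {1} from by decide]; norm_num [Matrix.cons_val_two, Matrix.cons_val_three]⟩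
  · have := h2 1 (by decide)
    rw [show ({0,1} : Finset (Fin 3)).erase 1 = {0} from by decide] at this
    norm_num [Matrix.cons_val_two, Matrix.cons_val_three] at this
  · fin_cases hg <;> norm_num [Finset.sum_insert, Finset.sum_singleton, Finset.mem_insert, Finset.mem_singleton, Fin.ext_iff, Matrix.cons_val_two, Matrix.cons_val_three]
  · fin_cases hg
    · rw [show ({0,1,2} : Finset (Fin 4)).erase 0 = {1,2} from by decide]
      norm_num [Finset.sum_insert, Finset.sum_singleton, Finset.mem_insert, Finset.mem_singleton, Fin.ext_iff, Matrix.cons_val_two, Matrix.cons_val_three]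
    · rw [show ({0,1,2} : Finset (Fin 4)).erase 1 = {0,2} from by decide]
      norm_num [Finset.sum_insert, Finset.sum_singleton, Finset.mem_insert, Finset.mem_singleton, Fin.ext_iff, Matrix.cons_val_two, Matrix.cons_val_three]
    · rw [show ({0,1,2} : Finset (Fin 4)).erase 2 = {0,1} from by decide]
      norm_num [Finset.sum_insert, Finset.sum_singleton, Finset.mem_insert, Finset.mem_singleton, Fin.ext_iff, Matrix.cons_val_two, Matrix.cons_val_three]
  · obtain ⟨g, hg, hle⟩ := h2 (by
      norm_num [Finset.sum_insert, Finset.sum_singleton, Finset.mem_insert, Finset.mem_singleton, Fin.ext_iff, Matrix.cons_val_two, Matrix.cons_val_three])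
    fin_cases hg
    · rw [show ({0,1,2} : Finset (Fin 4)).erase 0 = {1,2} from by decide] at hle
      norm_num [Finset.sum_insert, Finset.sum_singleton, Finset.mem_insert, Finset.mem_singleton, Fin.ext_iff, Matrix.cons_val_two, Matrix.cons_val_three] at hle
    · rw [show ({0,1,2} : Finset (Fin 4)).erase 1 = {0,2} from by decide] at hle
      norm_num [Finset.sum_insert, Finset.sum_singleton, Finset.mem_insert, Finset.mem_singleton, Fin.ext_iff, Matrix.cons_val_two, Matrix.cons_val_three] at hle
    · rw [show ({0,1,2} : Finset (Fin 4)).erase 2 = {0,1} from by decide] at hle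
      norm_num [Finset.sum_insert, Finset.sum_singleton, Finset.mem_insert, Finset.mem_singleton, Fin.ext_iff, Matrix.cons_val_two, Matrix.cons_val_three] at hle
end
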